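/- Let (Ω, 𝒜, P) be a probability space, let n, d ≥ 1 and 1 ≤ m ≤ d, let μ : Fin d → ℝ satisfy 0 < μ j < 1 for every j ≤ m, and let X : Fin n → Fin d → Ω → ℕ have right-repeated structure with midpoint m and parameter μ. Let y : Fin d → ℕ and k : Fin d → ℕ satisfy: y j ≤ 1 and y j ≤ k j ≤ n for every j ≤ m, and k j = k m and y j = y m for every j > m. Then P({ω : for every j ∈ Fin d, y j + Σ_{i < n−1} X i j (ω) = k j}) / P({ω : for every j ∈ Fin d, Σ_{i < n} X i j (ω) = k j}) = ∏_{j ≤ m} (if y j = 1 then (k j / n) / μ j else (1 − k j / n) / (1 − μ j)); in particular the denominator probability is strictly positive. (Partial Ratio Equality, side = right: the Bayesian decision ratio on a population whose attributes above the midpoint are exact copies of attribute m equals the likelihood ratio test statistic clipped to the first m attributes.) -/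

import Mathlib

open MeasureTheory ProbabilityTheory Finset

/-!
Since the attributes above the midpoint are copies of attribute `m`, both events only constrain
the first `m` attributes. There the column sums `∑ i ∈ S, X i j` are independent binomial
variables: an outcome with prescribed column sums amounts to choosing which records carry the
ones, and by independence each choice has probability `∏ j, μ j ^ c j * (1 - μ j) ^ (#S - c j)`.
The ratio of the `Binomial(n - 1)` mass at `k - y` to the `Binomial(n)` mass at `k` is
`(k / n) / μ` or `(1 - k / n) / (1 - μ)` by `n * C(n-1, k-1) = k * C(n, k)` and
`n * C(n-1, k) = (n - k) * C(n, k)`.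
-/

/-- `X : Fin n → Fin d → Ω → ℕ` has *right-repeated structure* with midpoint `m`
(in one-based terms, `1 ≤ m ≤ d`, corresponding to the zero-based index `m - 1`)
and parameter `μ`: the subfamily `(X i j)` over all records `i` and attributes
`j ≤ m` (zero-based `(j : ℕ) < m`) is mutually independent, each such `X i j` is
`{0,1}`-valued with `P(X i j = 1) = μ j`, and every attribute `j > m` (zero-based
`m ≤ (j : ℕ)`) is an exact copy of attribute `m` (zero-based index `m - 1`). -/
def RightRepeated {Ω : Type*} [MeasurableSpace Ω] (P : Measure Ω)
    {n d : ℕ} (m : ℕ) (X : Fin n → Fin d → Ω → ℕ) (μ : Fin d → ℝ) : Prop :=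
  (∀ i j, Measurable (X i j)) ∧
  iIndepFun
    (fun p : Fin n × {j : Fin d // (j : ℕ) < m} => X p.1 p.2.1) P ∧
  (∀ i, ∀ j : Fin d, (j : ℕ) < m →
    (∀ ω, X i j ω = 0 ∨ X i j ω = 1) ∧ (P {ω | X i j ω = 1}).toReal = μ j) ∧
  (∀ i, ∀ j : Fin d, m ≤ (j : ℕ) →
    ∀ jm : Fin d, (jm : ℕ) = m - 1 → X i j = X i jm)

def binomialMass (n k : ℕ) (p : ℝ) : ℝ := n.choose k * p ^ k * (1 - p) ^ (n - k)

section BinomialMass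

variable {n k : ℕ} {p : ℝ}

lemma binomialMass_pos (hkn : k ≤ n) (hp₀ : 0 < p) (hp₁ : p < 1) : 0 < binomialMass n k p := by
  have : 0 < 1 - p := by linarith
  unfold binomialMass
  positivity [Nat.choose_pos hkn]

lemma binomialMass_div_succ_succ (hkn : k ≤ n) (hp₀ : 0 < p) (hp₁ : p < 1) :
    binomialMass n k p / binomialMass (n + 1) (k + 1) p = ((k + 1) / (n + 1)) / p := by
  have hchoose := congrArg (Nat.cast (R := ℝ)) (Nat.add_one_mul_choose_eq n k)
  push_cast at hchoose
  have : ((n + 1).choose (k + 1) : ℝ) ≠ 0 := by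
    positivity [Nat.choose_pos (by omega : k + 1 ≤ n + 1)]
  have : 1 - p ≠ 0 := by linarith
  unfold binomialMass
  rw [Nat.add_sub_add_right, pow_succ]
  field_simp
  linear_combination hchoose

lemma binomialMass_div_succ (hkn : k ≤ n + 1) (hp₀ : 0 < p) (hp₁ : p < 1) :
    binomialMass n k p / binomialMass (n + 1) k p = (1 - k / (n + 1)) / (1 - p) := by
  rcases hkn.eq_or_lt with rfl | hkn
  · simp [binomialMass, div_self (by positivity : (n : ℝ) + 1 ≠ 0)]
  have hkn := Nat.lt_succ_iff.mp hkn
  have hchoose := congrArg (Nat.cast (R := ℝ)) (Nat.choose_mul_succ_eq n k)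
  push_cast [Nat.cast_sub (by omega : k ≤ n + 1)] at hchoose
  have : ((n + 1).choose k : ℝ) ≠ 0 := by positivity [Nat.choose_pos (by omega : k ≤ n + 1)]
  have : 1 - p ≠ 0 := by linarith
  unfold binomialMass
  rw [show n + 1 - k = n - k + 1 by omega, pow_succ]
  field_simp
  linear_combination hchoose

lemma binomialMass_pred_sub_div {y : ℕ} (hn : 1 ≤ n) (hy : y ≤ 1) (hyk : y ≤ k)
    (hkn : k ≤ n) (hp₀ : 0 < p) (hp₁ : p < 1) :
    binomialMass (n - 1) (k - y) p / binomialMass n k p =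
      if y = 1 then ((k : ℝ) / n) / p else (1 - (k : ℝ) / n) / (1 - p) := by
  obtain ⟨n, rfl⟩ := Nat.exists_eq_add_of_le' hn
  interval_cases y
  · simpa using binomialMass_div_succ hkn hp₀ hp₁
  · obtain ⟨k, rfl⟩ := Nat.exists_eq_add_of_le' hyk
    simpa using binomialMass_div_succ_succ (by omega) hp₀ hp₁

end BinomialMass

section BernoulliArray

variable {Ω ι κ : Type*} {Z : ι → κ → Ω → ℕ}

lemma setOf_forall_filter_eq_eq_biInter [Fintype κ] [DecidableEq ι]
    (h01 : ∀ i j ω, Z i j ω = 0 ∨ Z i j ω = 1) {S : Finset ι} {T : κ → Finset ι}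
    (hT : ∀ j, T j ⊆ S) :
    {ω | ∀ j, {i ∈ S | Z i j ω = 1} = T j} =
      ⋂ q ∈ S ×ˢ (univ : Finset κ),
        (fun q : ι × κ => Z q.1 q.2) q ⁻¹' {if q.1 ∈ T q.2 then 1 else 0} := by
  ext ω
  simp only [Set.mem_ofPred_eq, Set.mem_iInter, Set.mem_preimage, Set.mem_singleton_iff,
    mem_product, mem_univ, and_true, Prod.forall, Finset.ext_iff, mem_filter]
  have hZ : ∀ i j, (Z i j ω = 1 ↔ i ∈ T j) ↔ Z i j ω = if i ∈ T j then 1 else 0 := by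
    intro i j
    rcases h01 i j ω with h | h <;> split_ifs <;> simp_all
  constructor
  · intro h i j hi
    exact (hZ i j).1 (by simpa [hi] using h j i)
  · intro h j i
    by_cases hi : i ∈ S
    · simpa [hi] using (hZ i j).2 (h i j hi)
    · simpa [hi] using fun h => hi (hT j h)

variable [MeasurableSpace Ω] {P : Measure Ω} [IsProbabilityMeasure P] {p : κ → ℝ}

lemma measureReal_setOf_eq_zero_eq_one_sub {W : Ω → ℕ} (hW : Measurable W)
    (h01 : ∀ ω, W ω = 0 ∨ W ω = 1) : P.real {ω | W ω = 0} = 1 - P.real {ω | W ω = 1} := by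
  have : {ω | W ω = 0} = {ω | W ω = 1}ᶜ := by
    ext ω
    have := h01 ω
    simp only [Set.mem_ofPred_eq, Set.mem_compl_iff]
    omega
  exact this ▸ probReal_compl_eq_one_sub (hW (measurableSet_singleton 1))

lemma measureReal_forall_filter_eq [Fintype κ] [DecidableEq ι]
    (hmeas : ∀ i j, Measurable (Z i j)) (hind : iIndepFun (fun q : ι × κ => Z q.1 q.2) P)
    (h01 : ∀ i j ω, Z i j ω = 0 ∨ Z i j ω = 1)
    (hp : ∀ i j, P.real {ω | Z i j ω = 1} = p j) {S : Finset ι} {T : κ → Finset ι}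
    (hT : ∀ j, T j ⊆ S) :
    P.real {ω | ∀ j, {i ∈ S | Z i j ω = 1} = T j} =
      ∏ j, p j ^ #(T j) * (1 - p j) ^ (#S - #(T j)) := by
  rw [setOf_forall_filter_eq_eq_biInter h01 hT, measureReal_def,
    hind.measure_inter_preimage_eq_mul _ (fun _ _ => measurableSet_singleton _),
    ENNReal.toReal_prod, prod_product_right]
  refine prod_congr rfl fun j _ => ?_
  have hfactor : ∀ i, (P (Z i j ⁻¹' {if i ∈ T j then 1 else 0})).toReal =
      if i ∈ T j then p j else 1 - p j := by
    intro i
    rw [← measureReal_def, ← hp i j]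
    split_ifs
    · rfl
    · exact measureReal_setOf_eq_zero_eq_one_sub (hmeas i j) (h01 i j)
  simp only [hfactor]
  rw [prod_ite, prod_const, prod_const, filter_mem_eq_inter, filter_notMem_eq_sdiff,
    inter_eq_right.mpr (hT j), card_sdiff_of_subset (hT j)]

theorem measureReal_forall_sum_eq_prod_binomialMass [Fintype κ] [DecidableEq κ]
    (hmeas : ∀ i j, Measurable (Z i j)) (hind : iIndepFun (fun q : ι × κ => Z q.1 q.2) P)
    (h01 : ∀ i j ω, Z i j ω = 0 ∨ Z i j ω = 1)
    (hp : ∀ i j, P.real {ω | Z i j ω = 1} = p j) (S : Finset ι) (c : κ → ℕ) :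
    P.real {ω | ∀ j, ∑ i ∈ S, Z i j ω = c j} = ∏ j, binomialMass #S (c j) (p j) := by
  classical
  have hsum_eq_card : ∀ j ω, ∑ i ∈ S, Z i j ω = #{i ∈ S | Z i j ω = 1} := by
    intro j ω
    rw [card_filter]
    refine sum_congr rfl fun i _ => ?_
    rcases h01 i j ω with h | h <;> simp [h]
  have hunion : {ω | ∀ j, ∑ i ∈ S, Z i j ω = c j} =
      ⋃ T ∈ Fintype.piFinset (fun j => S.powersetCard (c j)),
        {ω | ∀ j, {i ∈ S | Z i j ω = 1} = T j} := by
    ext ω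
    simp only [hsum_eq_card, Set.mem_ofPred_eq, Set.mem_iUnion, Fintype.mem_piFinset,
      mem_powersetCard, exists_prop]
    exact ⟨fun h => ⟨_, fun j => ⟨filter_subset _ _, h j⟩, fun _ => rfl⟩,
      fun ⟨T, hT, h⟩ j => h j ▸ (hT j).2⟩
  have hdisj : (Fintype.piFinset (fun j => S.powersetCard (c j)) :
      Set (κ → Finset ι)).PairwiseDisjoint fun T => {ω | ∀ j, {i ∈ S | Z i j ω = 1} = T j} :=
    fun T _ T' _ hne => Set.disjoint_left.2 fun ω h h' =>
      hne (funext fun j => (h j).symm.trans (h' j))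
  have hsub : ∀ T ∈ Fintype.piFinset (fun j => S.powersetCard (c j)), ∀ j, T j ⊆ S :=
    fun T hT j => (mem_powersetCard.1 (Fintype.mem_piFinset.1 hT j)).1
  rw [hunion, measureReal_biUnion_finset hdisj fun T hT => by
      rw [setOf_forall_filter_eq_eq_biInter h01 (hsub T hT)]
      exact Finset.measurableSet_biInter _ fun q _ => hmeas q.1 q.2 (measurableSet_singleton _),
    sum_congr rfl fun T hT => measureReal_forall_filter_eq hmeas hind h01 hp (hsub T hT),
    ← prod_univ_sum (fun j => S.powersetCard (c j)) fun j T => p j ^ #T * (1 - p j) ^ (#S - #T)]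
  refine prod_congr rfl fun j _ => ?_
  rw [sum_congr rfl fun T hT => by rw [(mem_powersetCard.1 hT).2], sum_const, card_powersetCard,
    nsmul_eq_mul, binomialMass, mul_assoc]

end BernoulliArray

section RightRepeated

variable {Ω : Type*} [MeasurableSpace Ω] {P : Measure Ω} {n d m : ℕ}
  {X : Fin n → Fin d → Ω → ℕ} {μ : Fin d → ℝ}

lemma RightRepeated.setOf_forall_eq_restrict (hX : RightRepeated P m X μ) (hm : 1 ≤ m)
    (S : Finset (Fin n)) {f : Fin d → ℕ → Prop}
    (hf : ∀ j : Fin d, (hj : m ≤ (j : ℕ)) → f j = f ⟨m - 1, by have := j.isLt; omega⟩) :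
    {ω | ∀ j, f j (∑ i ∈ S, X i j ω)} =
      {ω | ∀ j : {j : Fin d // (j : ℕ) < m}, f j (∑ i ∈ S, X i j ω)} := by
  ext ω
  refine ⟨fun h j => h j, fun h j => ?_⟩
  by_cases hj : (j : ℕ) < m
  · exact h ⟨j, hj⟩
  · push Not at hj
    have hcopy : ∀ i, X i j = X i ⟨m - 1, by omega⟩ := fun i => hX.2.2.2 i j hj _ rfl
    simpa only [hf j hj, hcopy] using h ⟨⟨m - 1, by omega⟩, by simp only; omega⟩

lemma RightRepeated.measureReal_forall_sum_eq [IsProbabilityMeasure P]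
    (hX : RightRepeated P m X μ) (S : Finset (Fin n)) (c : {j : Fin d // (j : ℕ) < m} → ℕ) :
    P.real {ω | ∀ j : {j : Fin d // (j : ℕ) < m}, ∑ i ∈ S, X i j ω = c j} =
      ∏ j : {j : Fin d // (j : ℕ) < m}, binomialMass #S (c j) (μ j) := by
  obtain ⟨hmeas, hind, hbern, -⟩ := hX
  exact measureReal_forall_sum_eq_prod_binomialMass
    (Z := fun i (j : {j : Fin d // (j : ℕ) < m}) => X i j) (fun i j => hmeas i j) hind
    (fun i j => (hbern i j j.2).1) (fun i j => (hbern i j j.2).2) S c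

end RightRepeated

/-- **Partial Ratio Equality (side = right).** On a population whose attributes
above the midpoint `m` are exact copies of attribute `m`, the Bayesian decision
ratio equals the likelihood ratio test statistic clipped to the first `m`
attributes; in particular the denominator probability is strictly positive. -/
theorem partial_ratio_equality_right {Ω : Type*} [MeasurableSpace Ω]
    (P : Measure Ω) [IsProbabilityMeasure P] (n d m : ℕ)
    (hn : 1 ≤ n) (hm : 1 ≤ m) (hmd : m ≤ d)
    (μ : Fin d → ℝ) (hμ : ∀ j : Fin d, (j : ℕ) < m → 0 < μ j ∧ μ j < 1)
    (X : Fin n → Fin d → Ω → ℕ) (hX : RightRepeated P m X μ)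
    (y : Fin d → ℕ) (k : Fin d → ℕ)
    (hyk : ∀ j : Fin d, (j : ℕ) < m → y j ≤ 1 ∧ y j ≤ k j ∧ k j ≤ n)
    (hrep : ∀ j : Fin d, m ≤ (j : ℕ) →
      k j = k ⟨m - 1, by omega⟩ ∧ y j = y ⟨m - 1, by omega⟩) :
    0 < (P {ω | ∀ j, (∑ i : Fin n, X i j ω) = k j}).toReal ∧
    (P {ω | ∀ j, y j + ∑ i ∈ univ.filter (fun i : Fin n => (i : ℕ) < n - 1),
        X i j ω = k j}).toReal /
      (P {ω | ∀ j, (∑ i : Fin n, X i j ω) = k j}).toReal =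
    ∏ j ∈ univ.filter (fun j : Fin d => (j : ℕ) < m),
      (if y j = 1 then ((k j : ℝ) / n) / μ j
        else (1 - (k j : ℝ) / n) / (1 - μ j)) := by
  set S := univ.filter (fun i : Fin n => (i : ℕ) < n - 1)
  have hS : #S = n - 1 := by simp [S, Fin.card_filter_val_lt]
  have hden : {ω | ∀ j, ∑ i, X i j ω = k j} =
      {ω | ∀ j : {j : Fin d // (j : ℕ) < m}, ∑ i, X i j ω = k j} :=
    hX.setOf_forall_eq_restrict hm univ (f := fun j s => s = k j) fun j hj => by
      rw [(hrep j hj).1]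
  have hnum : {ω | ∀ j, y j + ∑ i ∈ S, X i j ω = k j} =
      {ω | ∀ j : {j : Fin d // (j : ℕ) < m}, ∑ i ∈ S, X i j ω = k j - y j} := by
    rw [hX.setOf_forall_eq_restrict hm S (f := fun j s => y j + s = k j)
      fun j hj => by rw [(hrep j hj).1, (hrep j hj).2]]
    ext ω
    refine forall_congr' fun j => ?_
    have := (hyk j j.2).2.1
    omega
  simp only [← measureReal_def, hden, hnum, hX.measureReal_forall_sum_eq, hS, card_univ,
    Fintype.card_fin]
  refine ⟨prod_pos fun j _ => binomialMass_pos (hyk j j.2).2.2 (hμ j j.2).1 (hμ j j.2).2, ?_⟩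
  rw [← prod_div_distrib, prod_subtype (univ.filter fun j : Fin d => (j : ℕ) < m)
    (p := fun j : Fin d => (j : ℕ) < m) (by simp)]
  exact prod_congr rfl fun j _ => binomialMass_pred_sub_div hn (hyk j j.2).1 (hyk j j.2).2.1
    (hyk j j.2).2.2 (hμ j j.2).1 (hμ j j.2).2
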